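/- Let 0<q<1 and ν > 0. Then the Jackson integral over (0,∞) of z·(-q^{2ν+2}z²;q²)_∞/(-z²;q²)_∞, i.e. (1-q)·Σ_{m=-∞}^∞ q^{2m}·(-q^{2ν+2+2m};q²)_∞/(-q^{2m};q²)_∞, converges and equals (1-q)/(1-q^{2ν}). -/

import Mathlib

/-!
With `Q = q²`, `a = q^{2ν}` and `F y = (-a y; Q)_∞ / (-y; Q)_∞`, the functional equation
`(-y; Q)_∞ = (1 + y) (-Q y; Q)_∞` turns the `m`-th term into
`(F (Q^{m+1}) - F (Q^m)) / (1 - a)`, so the bilateral sum telescopes. At `y → 0⁺` we have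
`F y → 1`, while for `y ≥ 1` the factor `(1 + a y) / (1 + y) ≤ (1 + a) / 2` makes `F (Q^{-n})`
decay geometrically; hence the sum is `1 / (1 - a)`.
-/

/-- The infinite q-Pochhammer symbol over the reals. -/
noncomputable def qpR (q x : ℝ) : ℝ := ∏' n : ℕ, (1 - x * q ^ n)

open Real Filter Topology Finset

lemma hasSum_sub_of_le_succ {F : ℕ → ℝ} {b : ℝ} (hF : ∀ n, F n ≤ F (n + 1))
    (h : Tendsto F atTop (𝓝 b)) : HasSum (fun n => F (n + 1) - F n) (b - F 0) := by
  rw [hasSum_iff_tendsto_nat_of_nonneg fun n => sub_nonneg.2 (hF n)]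
  simpa only [sum_range_sub] using h.sub_const (F 0)

lemma hasSum_int_sub_of_le_succ {F : ℤ → ℝ} {a b : ℝ} (hF : ∀ m, F m ≤ F (m + 1))
    (hneg : Tendsto (fun n : ℕ => F (-n)) atTop (𝓝 a))
    (hpos : Tendsto (fun n : ℕ => F n) atTop (𝓝 b)) :
    HasSum (fun m => F (m + 1) - F m) (b - a) := by
  have hnat : HasSum (fun n : ℕ => F (n + 1) - F n) (b - F 0) := by
    simpa using hasSum_sub_of_le_succ (F := fun n : ℕ => F n) (fun n => by simpa using hF n) hpos
  have hnegnat : HasSum (fun n : ℕ => F (-(n + 1) + 1) - F (-(n + 1))) (F 0 - a) := by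
    convert hasSum_sub_of_le_succ (F := fun n : ℕ => -F (-n))
      (fun n => by simpa [neg_add] using hF (-(n + 1 : ℤ))) hneg.neg using 1
    · ext n; push_cast; ring_nf
    · simp only [Nat.cast_zero, neg_zero]; ring
  convert HasSum.of_nat_of_neg_add_one (f := fun m : ℤ => F (m + 1) - F m) hnat hnegnat using 1
  ring

section qPochhammer

variable {Q : ℝ}

lemma multipliable_one_sub_mul_pow (hQ : |Q| < 1) (x : ℝ) :
    Multipliable fun n : ℕ => 1 - x * Q ^ n := by
  simpa [sub_eq_add_neg] using
    Real.multipliable_one_add_of_summable ((summable_geometric_of_abs_lt_one hQ).mul_left (-x))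

lemma qpR_eq_one_sub_mul (hQ : |Q| < 1) (x : ℝ) : qpR Q x = (1 - x) * qpR Q (Q * x) := by
  have hshift : (fun n : ℕ => 1 - x * Q ^ (n + 1)) = fun n => 1 - Q * x * Q ^ n := by
    funext n; ring
  rw [qpR, tprod_eq_zero_mul' (by simpa only [hshift] using multipliable_one_sub_mul_pow hQ _),
    hshift, pow_zero, mul_one, qpR]

variable {y : ℝ}

lemma summable_log_one_add_mul_pow (hQ0 : 0 ≤ Q) (hQ1 : Q < 1) :
    Summable fun n : ℕ => log (1 + y * Q ^ n) :=
  Real.summable_log_one_add_of_summable ((summable_geometric_of_lt_one hQ0 hQ1).mul_left y)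

lemma qpR_neg_eq_exp_tsum (hQ0 : 0 ≤ Q) (hQ1 : Q < 1) (hy : 0 ≤ y) :
    qpR Q (-y) = exp (∑' n : ℕ, log (1 + y * Q ^ n)) := by
  rw [rexp_tsum_eq_tprod (fun n => by positivity) (summable_log_one_add_mul_pow hQ0 hQ1), qpR]
  simp

lemma one_le_qpR_neg (hQ0 : 0 ≤ Q) (hQ1 : Q < 1) (hy : 0 ≤ y) : 1 ≤ qpR Q (-y) := by
  rw [qpR_neg_eq_exp_tsum hQ0 hQ1 hy]
  exact one_le_exp (tsum_nonneg fun n => log_nonneg (le_add_of_nonneg_right (by positivity)))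

lemma qpR_neg_pos (hQ0 : 0 ≤ Q) (hQ1 : Q < 1) (hy : 0 ≤ y) : 0 < qpR Q (-y) :=
  zero_lt_one.trans_le (one_le_qpR_neg hQ0 hQ1 hy)

lemma qpR_neg_le_exp (hQ0 : 0 ≤ Q) (hQ1 : Q < 1) (hy : 0 ≤ y) :
    qpR Q (-y) ≤ exp (y / (1 - Q)) := by
  have hgeom := (summable_geometric_of_lt_one hQ0 hQ1).mul_left y
  rw [qpR_neg_eq_exp_tsum hQ0 hQ1 hy, exp_le_exp]
  calc ∑' n : ℕ, log (1 + y * Q ^ n) ≤ ∑' n : ℕ, y * Q ^ n :=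
        (summable_log_one_add_mul_pow hQ0 hQ1).tsum_le_tsum
          (fun n => (log_le_sub_one_of_pos (by positivity)).trans_eq (by ring)) hgeom
    _ = y / (1 - Q) := by rw [tsum_mul_left, tsum_geometric_of_lt_one hQ0 hQ1, div_eq_mul_inv]

lemma tendsto_qpR_neg_nhdsGE_zero (hQ0 : 0 ≤ Q) (hQ1 : Q < 1) :
    Tendsto (fun y => qpR Q (-y)) (𝓝[≥] 0) (𝓝 1) := by
  have hexp : Tendsto (fun y => exp (y / (1 - Q))) (𝓝[≥] 0) (𝓝 1) := by
    have hcont : Continuous fun y => exp (y / (1 - Q)) := by fun_prop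
    simpa using (hcont.tendsto 0).mono_left nhdsWithin_le_nhds
  refine tendsto_of_tendsto_of_tendsto_of_le_of_le' tendsto_const_nhds hexp ?_ ?_ <;>
    filter_upwards [self_mem_nhdsWithin] with y hy
  exacts [one_le_qpR_neg hQ0 hQ1 hy, qpR_neg_le_exp hQ0 hQ1 hy]

end qPochhammer

noncomputable def qpRatio (Q a y : ℝ) : ℝ := qpR Q (-(a * y)) / qpR Q (-y)

section qpRatio

variable {Q a y : ℝ}

lemma qpRatio_eq_mul (hQ : |Q| < 1) :
    qpRatio Q a y = (1 + a * y) / (1 + y) * qpRatio Q a (Q * y) := by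
  rw [qpRatio, qpRatio, qpR_eq_one_sub_mul hQ, qpR_eq_one_sub_mul hQ (-y), ← mul_div_mul_comm,
    mul_neg, mul_neg, mul_left_comm Q a y, sub_neg_eq_add, sub_neg_eq_add]

lemma qpRatio_nonneg (hQ0 : 0 ≤ Q) (hQ1 : Q < 1) (ha : 0 ≤ a) (hy : 0 ≤ y) :
    0 ≤ qpRatio Q a y :=
  div_nonneg (qpR_neg_pos hQ0 hQ1 (mul_nonneg ha hy)).le (qpR_neg_pos hQ0 hQ1 hy).le

lemma qpRatio_mul_sub_qpRatio (hQ0 : 0 ≤ Q) (hQ1 : Q < 1) (hy : 0 ≤ y) :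
    qpRatio Q a (Q * y) - qpRatio Q a y =
      (1 - a) * (y * qpR Q (-(a * (Q * y))) / qpR Q (-y)) := by
  have hQ : |Q| < 1 := abs_lt.2 ⟨by linarith, hQ1⟩
  have hB := qpR_neg_pos hQ0 hQ1 (mul_nonneg hQ0 hy)
  have hy1 : 0 < 1 + y := by linarith
  rw [qpRatio_eq_mul (y := y) hQ, qpR_eq_one_sub_mul hQ (-y), mul_neg, sub_neg_eq_add, qpRatio]
  field_simp
  ring

lemma tendsto_qpRatio_nhdsGE_zero (hQ0 : 0 ≤ Q) (hQ1 : Q < 1) (ha : 0 ≤ a) :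
    Tendsto (qpRatio Q a) (𝓝[≥] 0) (𝓝 1) := by
  have hmul : Tendsto (fun y => a * y) (𝓝[≥] 0) (𝓝[≥] 0) := by
    refine tendsto_nhdsWithin_iff.2 ⟨?_, ?_⟩
    · simpa using ((continuous_const_mul a).tendsto 0).mono_left nhdsWithin_le_nhds
    · filter_upwards [self_mem_nhdsWithin] with y (hy : 0 ≤ y) using mul_nonneg ha hy
  have := ((tendsto_qpR_neg_nhdsGE_zero hQ0 hQ1).comp hmul).div
    (tendsto_qpR_neg_nhdsGE_zero hQ0 hQ1) one_ne_zero
  rw [div_one] at this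
  exact this

lemma qpRatio_le_mul (hQ0 : 0 ≤ Q) (hQ1 : Q < 1) (ha0 : 0 ≤ a) (ha1 : a ≤ 1) (hy : 1 ≤ y) :
    qpRatio Q a y ≤ (1 + a) / 2 * qpRatio Q a (Q * y) := by
  rw [qpRatio_eq_mul (abs_lt.2 ⟨by linarith, hQ1⟩)]
  refine mul_le_mul_of_nonneg_right ?_ (qpRatio_nonneg hQ0 hQ1 ha0 (by positivity))
  rw [div_le_div_iff₀ (by linarith) two_pos]
  nlinarith

lemma tendsto_qpRatio_zpow_neg_natCast (hQ0 : 0 < Q) (hQ1 : Q < 1) (ha0 : 0 ≤ a)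
    (ha1 : a < 1) : Tendsto (fun n : ℕ => qpRatio Q a (Q ^ (-n : ℤ))) atTop (𝓝 0) := by
  set u : ℕ → ℝ := fun n => qpRatio Q a (Q ^ (-n : ℤ))
  have hstep : ∀ n, u (n + 1) ≤ (1 + a) / 2 * u n := by
    intro n
    have hQy : Q * Q ^ (-(n + 1 : ℕ) : ℤ) = Q ^ (-n : ℤ) := by
      rw [← zpow_one_add₀ hQ0.ne']; push_cast; ring_nf
    simp only [u, ← hQy]
    exact qpRatio_le_mul hQ0.le hQ1 ha0 ha1.le (one_le_zpow_of_nonpos₀ hQ0 hQ1.le (by omega))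
  have hgeom : Tendsto (fun n => ((1 + a) / 2) ^ n * u 0) atTop (𝓝 0) := by
    simpa using (tendsto_pow_atTop_nhds_zero_of_lt_one (by linarith) (by linarith)).mul_const (u 0)
  refine squeeze_zero (fun n => qpRatio_nonneg hQ0.le hQ1 ha0 (by positivity)) (fun n => ?_) hgeom
  exact le_geom (by linarith) n fun k _ => hstep k

end qpRatio

theorem hasSum_zpow_mul_qpR_div_qpR {Q a : ℝ} (hQ0 : 0 < Q) (hQ1 : Q < 1) (ha0 : 0 ≤ a)
    (ha1 : a < 1) :
    HasSum (fun m : ℤ => Q ^ m * qpR Q (-(a * (Q * Q ^ m))) / qpR Q (-(Q ^ m))) (1 - a)⁻¹ := by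
  set F : ℤ → ℝ := fun m => qpRatio Q a (Q ^ m)
  have hdiff : ∀ m, F (m + 1) - F m =
      (1 - a) * (Q ^ m * qpR Q (-(a * (Q * Q ^ m))) / qpR Q (-(Q ^ m))) := by
    intro m
    rw [← qpRatio_mul_sub_qpRatio hQ0.le hQ1 (by positivity), mul_comm Q,
      ← zpow_add_one₀ hQ0.ne']
  have hmono : ∀ m, F m ≤ F (m + 1) := by
    intro m
    rw [← sub_nonneg, hdiff]
    have hB := qpR_neg_pos hQ0.le hQ1 (zpow_nonneg hQ0.le m)
    have hA := qpR_neg_pos hQ0.le hQ1 (y := a * (Q * Q ^ m)) (by positivity)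
    have := zpow_pos hQ0 m
    positivity
  have hpos : Tendsto (fun n : ℕ => F n) atTop (𝓝 1) := by
    refine (tendsto_qpRatio_nhdsGE_zero hQ0.le hQ1 ha0).comp (tendsto_nhdsWithin_iff.2 ⟨?_, ?_⟩)
    · simpa using tendsto_pow_atTop_nhds_zero_of_lt_one hQ0.le hQ1
    · exact Eventually.of_forall fun n => Set.mem_Ici.2 (zpow_nonneg hQ0.le _)
  have hsum := (hasSum_int_sub_of_le_succ hmono
    (tendsto_qpRatio_zpow_neg_natCast hQ0 hQ1 ha0 ha1) hpos).mul_left (1 - a)⁻¹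
  rw [sub_zero, mul_one] at hsum
  refine hsum.congr_fun fun m => ?_
  rw [hdiff, inv_mul_cancel_left₀ (sub_ne_zero.2 ha1.ne')]

theorem stmt15 (q ν : ℝ) (hq0 : 0 < q) (hq1 : q < 1) (hν : 0 < ν) :
    (Summable fun m : ℤ =>
      q ^ (2 * (m : ℝ)) * qpR (q ^ 2) (-(q ^ (2 * ν + 2 + 2 * (m : ℝ)))) /
        qpR (q ^ 2) (-(q ^ (2 * (m : ℝ))))) ∧
    (1 - q) * ∑' m : ℤ,
        q ^ (2 * (m : ℝ)) * qpR (q ^ 2) (-(q ^ (2 * ν + 2 + 2 * (m : ℝ)))) /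
          qpR (q ^ 2) (-(q ^ (2 * (m : ℝ)))) =
      (1 - q) / (1 - q ^ (2 * ν)) := by
  have hQ0 : 0 < q ^ 2 := by positivity
  have hQ1 : q ^ 2 < 1 := by nlinarith
  have hzpow : ∀ m : ℤ, q ^ (2 * (m : ℝ)) = (q ^ 2) ^ m := fun m => by
    rw [rpow_mul hq0.le, rpow_two, rpow_intCast]
  have hexp : ∀ m : ℤ,
      q ^ (2 * ν + 2 + 2 * (m : ℝ)) = q ^ (2 * ν) * (q ^ 2 * (q ^ 2) ^ m) := fun m => by
    rw [rpow_add hq0, rpow_add hq0, rpow_two, hzpow, mul_assoc]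
  have hsum := hasSum_zpow_mul_qpR_div_qpR (a := q ^ (2 * ν)) hQ0 hQ1 (by positivity)
    (rpow_lt_one hq0.le hq1 (by positivity))
  simp only [hzpow, hexp]
  exact ⟨hsum.summable, by rw [hsum.tsum_eq, div_eq_mul_inv]⟩
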